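/- Let P be a definite logic program whose rules define every predicate symbol occurring in P, with rule set D viewed as a definition of all its predicates, let CF contain all constants and functors of P and at least one constant, and let Σ be all symbols of P and CF. For every ground atom A over Σ that is false in the least Herbrand model LHM_CF(P), the negation ¬A is true in every structure that satisfies D as a definition and satisfies the Herbrand Axiom Herb(CF); that is, the theory {Herb(CF), D} semantically entails ¬A. -/

import Mathlib

/-- Terms over function symbols `Func` (with arities `arF`) and variables `V`.
Constants are the function symbols of arity `0`. -/
inductive Term (Func : Type) (arF : Func → ℕ) (V : Type) : Type
  | var : V → Term Func arF V
  | func : (f : Func) → (Fin (arF f) → Term Func arF V) → Term Func arF V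

/-- Ground terms: terms without variables.  `GTerm Func arF` is the Herbrand
universe `HU(CF)` for the set `CF` of constant and function symbols. -/
abbrev GTerm (Func : Type) (arF : Func → ℕ) : Type := Term Func arF Empty

/-- A first-order structure for the vocabulary with function symbols `Func`
(arities `arF`) and predicate symbols `Pred` (arities `arP`): a nonempty universe
together with interpretations of all function and predicate symbols. -/
structure Struc (Func : Type) (arF : Func → ℕ) (Pred : Type) (arP : Pred → ℕ) : Type 1 where
  carrier : Type
  nonempty : Nonempty carrier
  interpF : (f : Func) → (Fin (arF f) → carrier) → carrier
  interpP : (p : Pred) → (Fin (arP p) → carrier) → Prop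

variable {Func : Type} {arF : Func → ℕ} {Pred : Type} {arP : Pred → ℕ}

/-- Evaluation of a term in a structure under a variable assignment. -/
def Term.eval (M : Struc Func arF Pred arP) {V : Type} (σ : V → M.carrier) :
    Term Func arF V → M.carrier
  | .var v => σ v
  | .func f args => M.interpF f fun i => (args i).eval M σ

/-- An atomic formula `p(t₁, …, tₖ)` with variables from `V`. -/
structure Atom (Func : Type) (arF : Func → ℕ) (Pred : Type) (arP : Pred → ℕ)
    (V : Type) : Type where
  pred : Pred
  args : Fin (arP pred) → Term Func arF V

/-- A rule `A ← B₁, …, Bₙ` of a definite logic program (variables are natural numbers). -/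
structure Rule (Func : Type) (arF : Func → ℕ) (Pred : Type) (arP : Pred → ℕ) : Type where
  head : Atom Func arF Pred arP ℕ
  body : List (Atom Func arF Pred arP ℕ)

/-- Truth of an atom in a structure under an assignment. -/
def Atom.holds (M : Struc Func arF Pred arP) {V : Type} (σ : V → M.carrier)
    (a : Atom Func arF Pred arP V) : Prop :=
  M.interpP a.pred fun i => (a.args i).eval M σ

/-- A structure satisfies a rule as a first-order implication: the universal closure
of `B₁ ∧ ⋯ ∧ Bₙ → A`. -/
def Rule.holds (M : Struc Func arF Pred arP) (r : Rule Func arF Pred arP) : Prop :=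
  ∀ σ : ℕ → M.carrier, (∀ b ∈ r.body, b.holds M σ) → r.head.holds M σ

/-- `M` satisfies all rules of `D` as first-order implications (the Horn theory of `D`). -/
def SatRules (M : Struc Func arF Pred arP) (D : Set (Rule Func arF Pred arP)) : Prop :=
  ∀ r ∈ D, r.holds M

/-- `M` satisfies the rule set `D` as a definition of all predicate symbols:
`M` satisfies every rule as an implication, and for every structure `N` with the same
universe and the same interpretation of all parameter symbols (here: all function
symbols) that satisfies every rule as an implication, `p^M ⊆ p^N` for every defined
predicate `p` (here: every predicate). -/
def SatDef (D : Set (Rule Func arF Pred arP)) (M : Struc Func arF Pred arP) : Prop :=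
  SatRules M D ∧
    ∀ IP : (p : Pred) → (Fin (arP p) → M.carrier) → Prop,
      SatRules ⟨M.carrier, M.nonempty, M.interpF, IP⟩ D →
        ∀ p args, M.interpP p args → IP p args

/-- If `CF` contains at least one constant then the Herbrand universe is nonempty. -/
theorem nonempty_gterm (hc : ∃ f : Func, arF f = 0) : Nonempty (GTerm Func arF) := by
  obtain ⟨f, hf⟩ := hc
  exact ⟨.func f fun i => (Fin.cast hf i).elim0⟩

/-- The Herbrand structure with universe `HU(CF)`, Herbrand values for all constant and
function symbols, and predicate interpretations `IP`. -/
def HStruc (h : Nonempty (GTerm Func arF))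
    (IP : (p : Pred) → (Fin (arP p) → GTerm Func arF) → Prop) :
    Struc Func arF Pred arP :=
  ⟨GTerm Func arF, h, fun f args => .func f args, IP⟩

/-- The least Herbrand model of the program `D`: the Herbrand structure interpreting
each predicate by the intersection of its interpretations over all Herbrand models. -/
def LHM (D : Set (Rule Func arF Pred arP)) (h : Nonempty (GTerm Func arF)) :
    Struc Func arF Pred arP :=
  HStruc h fun p args =>
    ∀ IP : (p : Pred) → (Fin (arP p) → GTerm Func arF) → Prop,
      SatRules (HStruc h IP) D → IP p args

/-- `M` satisfies the Herbrand Axiom `Herb(CF)`: `M` is isomorphic, relative to the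
function symbols `CF`, to a structure with universe `HU(CF)` and Herbrand values for
all symbols of `CF`. -/
def SatHerb (M : Struc Func arF Pred arP) : Prop :=
  ∃ e : GTerm Func arF ≃ M.carrier,
    ∀ (f : Func) (args : Fin (arF f) → GTerm Func arF),
      e (.func f args) = M.interpF f fun i => e (args i)

/-- `M` and `N` are isomorphic relative to the full vocabulary `Σ`: a bijection of the
universes commuting with the interpretations of all function and predicate symbols. -/
def Iso (M N : Struc Func arF Pred arP) : Prop :=
  ∃ e : M.carrier ≃ N.carrier,
    (∀ (f : Func) (args : Fin (arF f) → M.carrier),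
        e (M.interpF f args) = N.interpF f fun i => e (args i)) ∧
    (∀ (p : Pred) (args : Fin (arP p) → M.carrier),
        M.interpP p args ↔ N.interpP p fun i => e (args i))

/-- A ground atom: an atomic formula without variables. -/
abbrev GAtom (Func : Type) (arF : Func → ℕ) (Pred : Type) (arP : Pred → ℕ) : Type :=
  Atom Func arF Pred arP Empty

/-- Truth of a ground atom in a structure. -/
def GAtom.holds (M : Struc Func arF Pred arP) (a : GAtom Func arF Pred arP) : Prop :=
  M.interpP a.pred fun i => (a.args i).eval M fun v => v.elim

/-!
An isomorphism `HU(CF) ≃ M` transports every Herbrand model of `D` to a model of `D` on the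
universe of `M` with the functions of `M`. Since `M` satisfies `D` as a definition, every atom
true in `M` is true in that model, hence in every Herbrand model of `D`, hence in the least one.
-/

theorem Term.eval_hom {M N : Struc Func arF Pred arP} (φ : M.carrier → N.carrier)
    (hφ : ∀ f args, φ (M.interpF f args) = N.interpF f (φ ∘ args))
    {V : Type} (σ : V → M.carrier) (t : Term Func arF V) :
    φ (t.eval M σ) = t.eval N (φ ∘ σ) := by
  induction t with
  | var v => rfl
  | func f args ih =>
    simp only [Term.eval, hφ]
    exact congrArg _ (funext ih)

theorem Term.eval_withInterpP (M : Struc Func arF Pred arP)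
    (IP : (p : Pred) → (Fin (arP p) → M.carrier) → Prop) {V : Type}
    (σ : V → M.carrier) (t : Term Func arF V) :
    t.eval ⟨M.carrier, M.nonempty, M.interpF, IP⟩ σ = t.eval M σ :=
  (Term.eval_hom (M := M) (N := ⟨M.carrier, M.nonempty, M.interpF, IP⟩) id (fun _ _ => rfl)
    σ t).symm

theorem Term.eval_hStruc (h : Nonempty (GTerm Func arF))
    (IP : (p : Pred) → (Fin (arP p) → GTerm Func arF) → Prop) (t : GTerm Func arF) :
    t.eval (HStruc h IP) (fun v => v.elim) = t := by
  induction t with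
  | var v => exact v.elim
  | func f args ih => exact congrArg (Term.func f) (funext ih)

theorem GAtom.holds_hStruc_iff (h : Nonempty (GTerm Func arF))
    (IP : (p : Pred) → (Fin (arP p) → GTerm Func arF) → Prop) (A : GAtom Func arF Pred arP) :
    A.holds (HStruc h IP) ↔ IP A.pred A.args := by
  simp only [GAtom.holds, Term.eval_hStruc]
  rfl

theorem GAtom.holds_LHM_iff (D : Set (Rule Func arF Pred arP)) (h : Nonempty (GTerm Func arF))
    (A : GAtom Func arF Pred arP) :
    A.holds (LHM D h) ↔
      ∀ IP : (p : Pred) → (Fin (arP p) → GTerm Func arF) → Prop,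
        SatRules (HStruc h IP) D → IP A.pred A.args :=
  GAtom.holds_hStruc_iff h _ A

namespace Iso

variable {M N : Struc Func arF Pred arP}

theorem atom_holds_iff (hMN : Iso M N) {V : Type} (σ : V → M.carrier)
    (a : Atom Func arF Pred arP V) : a.holds M σ ↔ a.holds N (hMN.choose ∘ σ) := by
  obtain ⟨hF, hP⟩ := hMN.choose_spec
  unfold Atom.holds
  rw [hP]
  exact iff_of_eq (congrArg _ (funext fun i => Term.eval_hom _ hF σ (a.args i)))

theorem satRules {D : Set (Rule Func arF Pred arP)} (hMN : Iso M N) (hN : SatRules N D) :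
    SatRules M D := fun r hr σ hbody =>
  (hMN.atom_holds_iff σ r.head).2 <|
    hN r hr _ fun b hb => (hMN.atom_holds_iff σ b).1 (hbody b hb)

theorem gAtom_holds_iff (hMN : Iso M N) (A : GAtom Func arF Pred arP) :
    A.holds M ↔ A.holds N := by
  have hσ : (hMN.choose ∘ fun v : Empty => v.elim) = fun v => v.elim := funext (·.elim)
  have := hMN.atom_holds_iff (fun v : Empty => v.elim) A
  rwa [hσ] at this

end Iso

-- The witness pulls `IP` back along the isomorphism `HU(CF) ≃ M`.
theorem SatHerb.exists_iso_hStruc {M : Struc Func arF Pred arP} (hM : SatHerb M)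
    (h : Nonempty (GTerm Func arF)) (IP : (p : Pred) → (Fin (arP p) → GTerm Func arF) → Prop) :
    ∃ IPM, Iso ⟨M.carrier, M.nonempty, M.interpF, IPM⟩ (HStruc h IP) := by
  obtain ⟨e, he⟩ := hM
  refine ⟨fun p args => IP p (e.symm ∘ args), e.symm, fun f args => ?_, fun _ _ => Iff.rfl⟩
  change e.symm (M.interpF f args) = Term.func f (e.symm ∘ args)
  rw [e.symm_apply_eq, he]
  simp only [Function.comp_def, Equiv.apply_symm_apply]

theorem SatDef.gAtom_holds_of_satRules {D : Set (Rule Func arF Pred arP)}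
    {M : Struc Func arF Pred arP} (hM : SatDef D M)
    {IP : (p : Pred) → (Fin (arP p) → M.carrier) → Prop}
    (hIP : SatRules ⟨M.carrier, M.nonempty, M.interpF, IP⟩ D) {A : GAtom Func arF Pred arP}
    (hA : A.holds M) : A.holds ⟨M.carrier, M.nonempty, M.interpF, IP⟩ := by
  have := hM.2 IP hIP A.pred _ hA
  simpa only [GAtom.holds, Term.eval_withInterpP] using this

theorem statement_12_general (D : Set (Rule Func arF Pred arP))
    (hc : ∃ f : Func, arF f = 0)
    (A : GAtom Func arF Pred arP)
    (hfalse : ¬ A.holds (LHM D (nonempty_gterm hc))) :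
    ∀ M : Struc Func arF Pred arP, SatDef D M → SatHerb M → ¬ A.holds M := by
  intro M hDef hHerb hA
  refine hfalse <| (GAtom.holds_LHM_iff D _ A).2 fun IP hIP => ?_
  obtain ⟨IPM, hiso⟩ := hHerb.exists_iso_hStruc (nonempty_gterm hc) IP
  have hA' := hDef.gAtom_holds_of_satRules (hiso.satRules hIP) hA
  exact (GAtom.holds_hStruc_iff _ IP A).1 ((hiso.gAtom_holds_iff A).1 hA')

/-- For every ground atom `A` over `Σ` that is false in the least Herbrand
model `LHM_CF(P)`, the negation `¬A` is true in every structure satisfying `D` as a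
definition and satisfying `Herb(CF)`: the theory `{Herb(CF), D}` semantically
entails `¬A`. -/
theorem statement_12 (D : Set (Rule Func arF Pred arP))
    (hdef : ∀ p : Pred, ∃ r ∈ D, r.head.pred = p)
    (hc : ∃ f : Func, arF f = 0)
    (A : GAtom Func arF Pred arP)
    (hfalse : ¬ A.holds (LHM D (nonempty_gterm hc))) :
    ∀ M : Struc Func arF Pred arP, SatDef D M → SatHerb M → ¬ A.holds M :=
  statement_12_general D hc A hfalse
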